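/- arXiv:1804.01369 — 2 statements merged into one kernel-verified Lean document; each statement's English description precedes it below -/
import Mathlib

section
/- Suppose Q ⊆ ℤ is such that every continuous (atomless) Borel probability measure μ on 𝕋 satisfies inf_{n∈Q} |μ̂(n)| = 0. Then every continuous Borel probability measure μ on 𝕋 satisfies liminf_{|n|→∞, n∈Q} |μ̂(n)| = 0, provided there exists a continuous probability measure ρ on 𝕋 with ρ̂(n) > 0 for every n ∈ ℤ and ρ̂(n) → 0 as |n| → ∞. -/
/-! The measure `ν = (μ ∗ μ̃ + ρ) / 2` is atomless with `ν̂(n) = (|μ̂(n)|² + ρ̂(n)) / 2`, so `ν̂` is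
strictly positive and dominates `|μ̂|² / 2`. A strictly positive function with infimum `0` on `Q`
takes values below any `ε > 0` at infinitely many points of `Q`; applied to `ν̂` and `ε² / 2`, this
gives `|μ̂(n)| < ε` for infinitely many `n ∈ Q`. -/

open MeasureTheory Filter Topology

noncomputable instance : MeasurableSpace Circle := borel Circle
instance : BorelSpace Circle := ⟨rfl⟩

/-- Fourier coefficient `μ̂(n) = ∫ λ^n dμ(λ)` of a measure on the circle. -/
noncomputable def fc (μ : Measure Circle) (n : ℤ) : ℂ := ∫ z : Circle, (z : ℂ) ^ n ∂μ

open scoped ENNReal ComplexConjugate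

namespace MeasureTheory.Measure

variable {G : Type*} [Group G] [MeasurableSpace G]

instance inv.instIsProbabilityMeasure [MeasurableInv G] (μ : Measure G) [IsProbabilityMeasure μ] :
    IsProbabilityMeasure μ.inv :=
  isProbabilityMeasure_map measurable_inv.aemeasurable

lemma inv_singleton_eq_zero [MeasurableInv G] {μ : Measure G}
    (hμ : ∀ x, μ {x} = 0) (a : G) : μ.inv {a} = 0 := by
  rw [Measure.inv_apply, Set.inv_singleton, hμ]

lemma mconv_singleton_eq_zero [MeasurableSingletonClass G] [MeasurableMul₂ G] (μ : Measure G)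
    {ν : Measure G} [SFinite ν]
    (hν : ∀ x, ν {x} = 0) (a : G) : (μ ∗ₘ ν) {a} = 0 := by
  have hmeas : MeasurableSet ((fun p : G × G => p.1 * p.2) ⁻¹' {a}) :=
    measurable_mul (measurableSet_singleton a)
  have hfiber (x : G) : Prod.mk x ⁻¹' ((fun p : G × G => p.1 * p.2) ⁻¹' {a}) = {x⁻¹ * a} := by
    ext y
    simp [eq_inv_mul_iff_mul_eq]
  rw [Measure.mconv, Measure.map_apply measurable_mul (measurableSet_singleton a),
    Measure.prod_apply hmeas]
  simp [hfiber, hν]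

end MeasureTheory.Measure

section Fourier

variable (μ ν : Measure Circle)

lemma continuous_coe_zpow (n : ℤ) : Continuous fun z : Circle => (z : ℂ) ^ n :=
  continuous_subtype_val.zpow₀ n fun z => Or.inl (Circle.coe_ne_zero z)

lemma norm_coe_zpow (z : Circle) (n : ℤ) : ‖(z : ℂ) ^ n‖ = 1 := by
  rw [norm_zpow, Circle.norm_coe, one_zpow]

lemma integrable_coe_zpow [IsFiniteMeasure μ] (n : ℤ) :
    Integrable (fun z : Circle => (z : ℂ) ^ n) μ :=
  (integrable_const (1 : ℝ)).mono' (continuous_coe_zpow n).aestronglyMeasurable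
    (ae_of_all _ fun z => (norm_coe_zpow z n).le)

lemma fc_add [IsFiniteMeasure μ] [IsFiniteMeasure ν] (n : ℤ) :
    fc (μ + ν) n = fc μ n + fc ν n :=
  integral_add_measure (integrable_coe_zpow μ n) (integrable_coe_zpow ν n)

lemma fc_smul (c : ℝ≥0∞) (n : ℤ) : fc (c • μ) n = c.toReal • fc μ n :=
  integral_smul_measure _ c

lemma fc_inv [IsFiniteMeasure μ] (n : ℤ) : fc μ.inv n = conj (fc μ n) := by
  rw [fc, Measure.inv, integral_map measurable_inv.aemeasurable
    (continuous_coe_zpow n).aestronglyMeasurable, fc, ← integral_conj]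
  simp [← Circle.coe_inv_eq_conj]

lemma fc_mconv [IsFiniteMeasure μ] [IsFiniteMeasure ν] (n : ℤ) :
    fc (μ ∗ₘ ν) n = fc μ n * fc ν n := by
  rw [fc, Measure.mconv, integral_map measurable_mul.aemeasurable
    (continuous_coe_zpow n).aestronglyMeasurable]
  simp only [Circle.coe_mul, mul_zpow]
  exact integral_prod_mul (fun z : Circle => (z : ℂ) ^ n) (fun z : Circle => (z : ℂ) ^ n)

lemma fc_mconv_inv_self [IsFiniteMeasure μ] (n : ℤ) :
    fc (μ ∗ₘ μ.inv) n = (‖fc μ n‖ ^ 2 : ℝ) := by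
  rw [fc_mconv, fc_inv, Complex.mul_conj, Complex.normSq_eq_norm_sq]

end Fourier

lemma exists_atomless_fc_pos_sq_le {μ ρ : Measure Circle} [IsProbabilityMeasure μ]
    [IsProbabilityMeasure ρ] (hμ : ∀ z, μ {z} = 0) (hρ : ∀ z, ρ {z} = 0)
    (hρ_real : ∀ n, fc ρ n = (fc ρ n).re) (hρ_pos : ∀ n, 0 < (fc ρ n).re) :
    ∃ ν : Measure Circle, IsProbabilityMeasure ν ∧ (∀ z, ν {z} = 0) ∧
      ∀ n, 0 < ‖fc ν n‖ ∧ ‖fc μ n‖ ^ 2 / 2 ≤ ‖fc ν n‖ := by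
  set ν : Measure Circle := (2 : ℝ≥0∞)⁻¹ • (μ ∗ₘ μ.inv + ρ)
  have hν_prob : IsProbabilityMeasure ν :=
    ⟨by simp [ν, measure_univ, ENNReal.inv_two_add_inv_two]⟩
  have hν_atoms (z : Circle) : ν {z} = 0 := by
    simp [ν, Measure.mconv_singleton_eq_zero μ (Measure.inv_singleton_eq_zero hμ), hρ]
  have hν_fc (n : ℤ) : fc ν n = ((‖fc μ n‖ ^ 2 + (fc ρ n).re) / 2 : ℝ) := by
    rw [fc_smul, fc_add, fc_mconv_inv_self, hρ_real]
    push_cast [ENNReal.toReal_inv, ENNReal.toReal_ofNat, Complex.real_smul, Complex.ofReal_re]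
    ring
  refine ⟨ν, hν_prob, hν_atoms, fun n => ?_⟩
  have hμ_sq := sq_nonneg ‖fc μ n‖
  have hρ_n := hρ_pos n
  rw [hν_fc, Complex.norm_real, Real.norm_of_nonneg (by positivity)]
  constructor <;> linarith

section RealSequences

variable {ι : Type*}

lemma frequently_lt_of_iInf_eq_zero {Q : Set ι} [Nonempty Q] {g : ι → ℝ}
    (hg : ∀ i ∈ Q, 0 < g i) (hinf : ⨅ i : Q, g i = 0) {ε : ℝ} (hε : 0 < ε) :
    ∃ᶠ i in cofinite ⊓ 𝓟 Q, g i < ε := by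
  rw [frequently_inf_principal, frequently_cofinite_iff_infinite]
  intro hfin
  obtain ⟨i, hi⟩ := exists_lt_of_ciInf_lt (hinf ▸ hε : ⨅ i : Q, g i < ε)
  obtain ⟨a, ⟨haQ, haε⟩, hmin⟩ := Set.exists_min_image _ g hfin ⟨i, i.2, hi⟩
  obtain ⟨j, hj⟩ := exists_lt_of_ciInf_lt (hinf ▸ hg a haQ : ⨅ i : Q, g i < g a)
  exact (hmin j ⟨j.2, hj.trans haε⟩).not_gt hj

lemma liminf_eq_zero_of_frequently_le {l : Filter ι} {f : ι → ℝ} (hf : ∀ i, 0 ≤ f i)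
    (h : ∀ ε > 0, ∃ᶠ i in l, f i ≤ ε) : liminf f l = 0 := by
  refine le_antisymm (le_of_forall_pos_le_add fun ε hε => ?_)
    (le_liminf_of_le (IsCoboundedUnder.of_frequently_le (h 1 one_pos)) (.of_forall hf))
  rw [zero_add]
  exact liminf_le_of_frequently_le (h ε hε) (isBoundedUnder_of ⟨0, hf⟩)

end RealSequences

theorem liminf_zero_of_inf_zero (Q : Set ℤ)
    (h : ∀ μ : Measure Circle, IsProbabilityMeasure μ → (∀ z : Circle, μ {z} = 0) →
      (⨅ n : Q, ‖fc μ n‖) = 0)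
    (hρ : ∃ ρ : Measure Circle, IsProbabilityMeasure ρ ∧ (∀ z : Circle, ρ {z} = 0) ∧
      (∀ n : ℤ, fc ρ n = ((fc ρ n).re : ℂ) ∧ 0 < (fc ρ n).re) ∧
      Tendsto (fun n : ℤ => fc ρ n) cofinite (𝓝 0)) :
    ∀ μ : Measure Circle, IsProbabilityMeasure μ → (∀ z : Circle, μ {z} = 0) →
      Filter.liminf (fun n : ℤ => ‖fc μ n‖) (cofinite ⊓ Filter.principal Q)
        = 0 := by
  intro μ _ hμ
  obtain ⟨ρ, _, hρ_atoms, hρ_pos, -⟩ := hρ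
  obtain ⟨ν, hν_prob, hν_atoms, hν⟩ := exists_atomless_fc_pos_sq_le hμ hρ_atoms
    (fun n => (hρ_pos n).1) (fun n => (hρ_pos n).2)
  rcases Q.eq_empty_or_nonempty with rfl | hQ
  · -- the filter is `⊥`, and the liminf along `⊥` is the junk value `sSup univ = 0`
    simp [liminf, limsInf]
  have : Nonempty Q := hQ.to_subtype
  refine liminf_eq_zero_of_frequently_le (fun n => norm_nonneg _) fun ε hε => ?_
  have hν_small := frequently_lt_of_iInf_eq_zero (fun n _ => (hν n).1) (h ν hν_prob hν_atoms)
    (half_pos (pow_pos hε 2))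
  exact hν_small.mono fun n hn =>
    le_of_pow_le_pow_left₀ two_ne_zero hε.le (by linarith [(hν n).2])
end

section
/- Let (n_k)_{k≥0} be a strictly increasing sequence of positive integers with n_0 = 1, and let ν be a finite complex Borel measure on 𝕋 with Re ν̂(1) < 1. Suppose there exists an at most countable set C ⊆ 𝕋 and a strictly increasing sequence (N_j)_{j≥1} of positive integers such that (1/N_j)·Σ_{k=1}^{N_j} λ^{n_k} → ν̂(1) as j → +∞ for every λ ∈ 𝕋 \ C. Then for every γ ∈ (0, 1 − Re ν̂(1)), every Borel probability measure μ on 𝕋 with sup_{k≥0}(1 − Re μ̂(n_k)) < γ has an atom. -/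
/-!
If `μ` had no atoms, the countable exceptional set `C` would be `μ`-null, so the Cesàro
means of `λ ↦ λ^{n_k}` would converge to `ν̂(1)` `μ`-almost everywhere. They are bounded by
`1`, so by dominated convergence the Cesàro means of the coefficients `μ̂(n_k)` converge to
`ν̂(1)` as well.
But every `Re μ̂(n_k)` exceeds `1 - γ`, hence so does every such mean, and in the limit
`1 - γ ≤ Re ν̂(1)`, contradicting `γ < 1 - Re ν̂(1)`.
-/

open MeasureTheory Filter Topology

noncomputable def cesaroMean (f : ℕ → ℂ) (N : ℕ) : ℂ :=
  (N : ℂ)⁻¹ * ∑ k ∈ Finset.Icc 1 N, f k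

section CesaroMean

variable {f : ℕ → ℂ} {N : ℕ}

lemma re_cesaroMean :
    (cesaroMean f N).re = (N : ℝ)⁻¹ * ∑ k ∈ Finset.Icc 1 N, (f k).re := by
  rw [cesaroMean, ← Complex.re_sum, ← Complex.ofReal_natCast, ← Complex.ofReal_inv,
    Complex.re_ofReal_mul]

lemma norm_cesaroMean_le {M : ℝ} (hf : ∀ k, ‖f k‖ ≤ M) : ‖cesaroMean f N‖ ≤ M := by
  rcases N.eq_zero_or_pos with rfl | hN
  · simpa [cesaroMean] using (norm_nonneg _).trans (hf 0)
  calc ‖cesaroMean f N‖ ≤ (N : ℝ)⁻¹ * ∑ k ∈ Finset.Icc 1 N, ‖f k‖ := by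
        rw [cesaroMean, norm_mul, norm_inv, Complex.norm_natCast]
        gcongr
        exact norm_sum_le _ _
    _ ≤ (N : ℝ)⁻¹ * ∑ _k ∈ Finset.Icc 1 N, M := by gcongr with k; exact hf k
    _ = M := by simp [field]

lemma le_re_cesaroMean {a : ℝ} (hN : 0 < N) (hf : ∀ k, a ≤ (f k).re) :
    a ≤ (cesaroMean f N).re := by
  calc a = (N : ℝ)⁻¹ * ∑ _k ∈ Finset.Icc 1 N, a := by simp [field]
    _ ≤ (cesaroMean f N).re := by rw [re_cesaroMean]; gcongr with k; exact hf k

lemma integral_cesaroMean {α : Type*} [MeasurableSpace α] {μ : Measure α}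
    {F : ℕ → α → ℂ} (hF : ∀ k, Integrable (F k) μ) (N : ℕ) :
    ∫ x, cesaroMean (F · x) N ∂μ = cesaroMean (fun k => ∫ x, F k x ∂μ) N := by
  simp only [cesaroMean]
  rw [integral_const_mul, integral_finsetSum _ fun k _ => hF k]

end CesaroMean

lemma norm_fc_le_one (μ : Measure Circle) [IsProbabilityMeasure μ] (m : ℤ) :
    ‖fc μ m‖ ≤ 1 := by
  simpa [fc] using norm_integral_le_of_norm_le_const (μ := μ) (C := 1)
    (Eventually.of_forall fun z : Circle => (by simp [norm_zpow, Circle.norm_coe] :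
      ‖(z : ℂ) ^ m‖ ≤ 1))

lemma tendsto_cesaroMean_fc_of_countable {μ : Measure Circle} [IsProbabilityMeasure μ]
    [NullSingletonClass μ] {n N : ℕ → ℕ} {c : ℂ} {C : Set Circle} (hC : C.Countable)
    (htend : ∀ z : Circle, z ∉ C →
      Tendsto (fun j => cesaroMean (fun k => (z : ℂ) ^ n k) (N j)) atTop (𝓝 c)) :
    Tendsto (fun j => cesaroMean (fun k => fc μ (n k)) (N j)) atTop (𝓝 c) := by
  have hcont (k : ℕ) : Continuous fun z : Circle => (z : ℂ) ^ n k :=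
    continuous_subtype_val.pow _
  have hlim : Tendsto (fun j => ∫ z, cesaroMean (fun k => (z : ℂ) ^ n k) (N j) ∂μ) atTop
      (𝓝 (∫ _, c ∂μ)) :=
    tendsto_integral_of_dominated_convergence (fun _ => 1)
      (fun j => (continuous_const.mul
        (continuous_finsetSum _ fun k _ => hcont k)).aestronglyMeasurable)
      (integrable_const 1)
      (fun j => Eventually.of_forall fun z =>
        norm_cesaroMean_le fun k => by simp [Circle.norm_coe])
      (by filter_upwards [hC.ae_notMem μ] with z hz using htend z hz)
  simpa [integral_cesaroMean fun k => (hcont k).integrable_of_hasCompactSupport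
    (HasCompactSupport.of_compactSpace _), fc] using hlim

theorem kazhdan_of_almost_uniform_distribution_general (n : ℕ → ℕ) (c : ℂ)
    (h : ∃ C : Set Circle, C.Countable ∧ ∃ N : ℕ → ℕ, StrictMono N ∧ (∀ j, 0 < N j) ∧
      ∀ z : Circle, z ∉ C →
        Tendsto (fun j => (N j : ℂ)⁻¹ * ∑ k ∈ Finset.Icc 1 (N j), (z : ℂ) ^ n k)
          atTop (𝓝 c)) :
    ∀ γ : ℝ, 0 < γ → γ < 1 - c.re →
      ∀ μ : Measure Circle, IsProbabilityMeasure μ →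
        (⨆ k : ℕ, (1 - (fc μ (n k : ℤ)).re)) < γ → ∃ z : Circle, μ {z} ≠ 0 := by
  intro γ _ hγ μ _ hsup
  by_contra! hno
  have : NullSingletonClass μ := ⟨hno⟩
  obtain ⟨C, hC, N, -, hNpos, htend⟩ := h
  have hbdd : BddAbove (Set.range fun k => 1 - (fc μ (n k : ℤ)).re) :=
    ⟨2, by
      rintro _ ⟨k, rfl⟩
      linarith [abs_le.1 (Complex.abs_re_le_norm (fc μ (n k))), norm_fc_le_one μ (n k)]⟩
  have hre (k : ℕ) : 1 - γ ≤ (fc μ (n k)).re := by linarith [le_ciSup hbdd k]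
  have hlim := (Complex.continuous_re.tendsto c).comp
    (tendsto_cesaroMean_fc_of_countable (μ := μ) hC htend)
  have : 1 - γ ≤ c.re :=
    ge_of_tendsto hlim (Eventually.of_forall fun j => le_re_cesaroMean (hNpos j) hre)
  linarith

theorem kazhdan_of_almost_uniform_distribution (n : ℕ → ℕ) (hn : StrictMono n)
    (hn0 : n 0 = 1) (c : ℂ) (hc : c.re < 1)
    (h : ∃ C : Set Circle, C.Countable ∧ ∃ N : ℕ → ℕ, StrictMono N ∧ (∀ j, 0 < N j) ∧
      ∀ z : Circle, z ∉ C →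
        Tendsto (fun j => (N j : ℂ)⁻¹ * ∑ k ∈ Finset.Icc 1 (N j), (z : ℂ) ^ n k)
          atTop (𝓝 c)) :
    ∀ γ : ℝ, 0 < γ → γ < 1 - c.re →
      ∀ μ : Measure Circle, IsProbabilityMeasure μ →
        (⨆ k : ℕ, (1 - (fc μ (n k : ℤ)).re)) < γ → ∃ z : Circle, μ {z} ≠ 0 :=
  kazhdan_of_almost_uniform_distribution_general n c h
end
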